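/- There exist c > 0 and K ∈ ℕ (depending on β, m) such that for all k₁, k₂, k₃ ∈ ℤ \ {0} with k₁ + k₂ + k₃ = 0 and max{|k₁|, |k₂|, |k₃|} ≥ K, one has |λ_{k₁} + λ_{k₂} + λ_{k₃}| ≥ c · (max{|k₁|, |k₂|, |k₃|})^{2m} · min{|k₁|, |k₂|, |k₃|}. -/

import Mathlib

/-!
`λ` is odd and its linear part cancels on `k₁ + k₂ + k₃ = 0`. Two of the `kⱼ` share a sign, so
after permuting and flipping all signs the triple is `(a, b, -(a + b))` with `0 < a ≤ b`, and then
`Σ λ = β D_{2m}(a, b) - α D_{2r}(a, b)` with `D_q(a, b) = (a + b)^{q+1} - a^{q+1} - b^{q+1}`.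
The tangent-line inequalities of the convex function `x ↦ x^{q+1}` give
`q a b^q ≤ D_q(a, b) ≤ (q + 1) a (a + b)^q`; since `b ≥ (a + b)/2` and `r < m`, the `β`-term is
at least `2m a ((a + b)/2)^{2m}` and swallows the `α`-term once `a + b` is large.
-/

open Real

namespace Real

theorem rpow_add_one_add_mul_sub_le {q x y : ℝ} (hq : 0 ≤ q) (hx : 0 < x) (hy : 0 ≤ y) :
    x ^ (q + 1) + (q + 1) * x ^ q * (y - x) ≤ y ^ (q + 1) := by
  have hs : -1 ≤ y / x - 1 := by linarith [div_nonneg hy hx.le]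
  have hb := one_add_mul_self_le_rpow_one_add hs (by linarith : (1 : ℝ) ≤ q + 1)
  rw [add_sub_cancel, div_rpow hy hx.le, le_div_iff₀ (by positivity)] at hb
  calc x ^ (q + 1) + (q + 1) * x ^ q * (y - x)
      = (1 + (q + 1) * (y / x - 1)) * x ^ (q + 1) := by
        rw [rpow_add_one hx.ne']; field_simp
    _ ≤ y ^ (q + 1) := hb

end Real

noncomputable def rpowDefect (q u v : ℝ) : ℝ := (u + v) ^ (q + 1) - u ^ (q + 1) - v ^ (q + 1)

theorem mul_mul_rpow_le_rpowDefect {q u v : ℝ} (hq : 0 ≤ q) (hu : 0 < u) (huv : u ≤ v) :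
    q * u * v ^ q ≤ rpowDefect q u v := by
  have hv : 0 < v := hu.trans_le huv
  have tangent := rpow_add_one_add_mul_sub_le hq hv (by linarith : 0 ≤ u + v)
  have hu_pow : u ^ (q + 1) ≤ u * v ^ q := by
    rw [rpow_add_one hu.ne', mul_comm]
    gcongr
  unfold rpowDefect
  nlinarith

theorem rpowDefect_le {q u v : ℝ} (hq : 0 ≤ q) (hu : 0 ≤ u) (hv : 0 < v) :
    rpowDefect q u v ≤ (q + 1) * u * (u + v) ^ q := by
  have tangent := rpow_add_one_add_mul_sub_le hq (by linarith : 0 < u + v) hv.le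
  have : 0 ≤ u ^ (q + 1) := by positivity
  unfold rpowDefect
  nlinarith

theorem exists_le_sub_rpowDefect {α β m r : ℝ} (hα : 0 ≤ α) (hβ : 0 < β) (hr : 0 ≤ r)
    (hrm : r < m) :
    ∃ K₀ : ℝ, ∀ u v : ℝ, 0 < u → u ≤ v → K₀ ≤ u + v →
      β * m / 2 ^ (2 * m) * (u + v) ^ (2 * m) * u
        ≤ β * rpowDefect (2 * m) u v - α * rpowDefect (2 * r) u v := by
  have hm : 0 < m := hr.trans_lt hrm
  set c := β * m / 2 ^ (2 * m) with hc
  have hc_pos : 0 < c := by positivity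
  obtain ⟨K₀, hK₀⟩ := Filter.eventually_atTop.1 <|
    (tendsto_rpow_atTop (by linarith : 0 < 2 * m - 2 * r)).eventually_ge_atTop
      (α * (2 * r + 1) / c)
  refine ⟨max K₀ 0, fun u v hu huv hK => ?_⟩
  have hS : 0 < u + v := by linarith
  have hv : 0 < v := hu.trans_le huv
  set S := u + v
  have hβ_term : 2 * c * S ^ (2 * m) * u ≤ β * rpowDefect (2 * m) u v := by
    have half_le : (S / 2) ^ (2 * m) ≤ v ^ (2 * m) := by gcongr; linarith
    rw [div_rpow hS.le (by norm_num)] at half_le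
    calc 2 * c * S ^ (2 * m) * u = β * (2 * m * u * (S ^ (2 * m) / 2 ^ (2 * m))) := by
          rw [hc]; ring
      _ ≤ β * (2 * m * u * v ^ (2 * m)) := by gcongr
      _ ≤ β * rpowDefect (2 * m) u v := by
          gcongr; exact mul_mul_rpow_le_rpowDefect (by positivity) hu huv
  have hα_term : α * rpowDefect (2 * r) u v ≤ c * S ^ (2 * m) * u := by
    have large : α * (2 * r + 1) ≤ S ^ (2 * m - 2 * r) * c :=
      (div_le_iff₀ hc_pos).1 (hK₀ S (le_of_max_le_left hK))
    calc α * rpowDefect (2 * r) u v ≤ α * ((2 * r + 1) * u * S ^ (2 * r)) := by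
          gcongr; exact rpowDefect_le (by positivity) hu.le hv
      _ = α * (2 * r + 1) * (u * S ^ (2 * r)) := by ring
      _ ≤ S ^ (2 * m - 2 * r) * c * (u * S ^ (2 * r)) := by gcongr
      _ = c * S ^ (2 * m) * u := by
          rw [← sub_add_cancel (2 * m) (2 * r), rpow_add hS, add_sub_cancel_right]; ring
  linarith

theorem Int.zero_sum_triple_induction {P : ℤ → ℤ → ℤ → Prop}
    (swap₁₂ : ∀ x y z, P x y z → P y x z) (swap₂₃ : ∀ x y z, P x y z → P x z y)
    (neg : ∀ x y z, P x y z → P (-x) (-y) (-z))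
    (pos : ∀ a b, 0 < a → a ≤ b → P a b (-(a + b))) :
    ∀ x y z, x ≠ 0 → y ≠ 0 → z ≠ 0 → x + y + z = 0 → P x y z := by
  have pos' : ∀ a b, 0 < a → 0 < b → P a b (-(a + b)) := by
    intro a b ha hb
    rcases le_total a b with hab | hab
    · exact pos a b ha hab
    · simpa only [add_comm] using swap₁₂ _ _ _ (pos b a hb hab)
  have same_sign : ∀ x y z, x + y + z = 0 → 0 < x ∧ 0 < y ∨ x < 0 ∧ y < 0 → P x y z := by
    rintro x y z hs (⟨hx, hy⟩ | ⟨hx, hy⟩) <;> obtain rfl : z = -(x + y) := by omega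
    · exact pos' x y hx hy
    · simpa [add_comm] using neg _ _ _ (pos' (-x) (-y) (by omega) (by omega))
  intro x y z hx hy hz hs
  -- two of `x, y, z` share a sign
  rcases hx.lt_or_gt with hx | hx <;> rcases hy.lt_or_gt with hy | hy <;>
    rcases hz.lt_or_gt with hz | hz <;>
    first
    | exact same_sign x y z hs (by omega)
    | exact swap₂₃ _ _ _ (same_sign x z y (by omega) (by omega))
    | exact swap₂₃ _ _ _ (swap₁₂ _ _ _ (swap₂₃ _ _ _ (swap₁₂ _ _ _
        (same_sign y z x (by omega) (by omega)))))

noncomputable def dispersion (α β μ m r : ℝ) (k : ℤ) : ℝ :=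
  -β * (k : ℝ) * |(k : ℝ)| ^ (2 * m) + α * (k : ℝ) * |(k : ℝ)| ^ (2 * r) - 2 * μ * (k : ℝ)

theorem dispersion_neg (α β μ m r : ℝ) (k : ℤ) :
    dispersion α β μ m r (-k) = -dispersion α β μ m r k := by
  simp only [dispersion, Int.cast_neg, abs_neg]
  ring

theorem dispersion_add_add_neg (α β μ m r : ℝ) {a b : ℤ} (ha : 0 < a) (hb : 0 < b) :
    dispersion α β μ m r a + dispersion α β μ m r b + dispersion α β μ m r (-(a + b))
      = β * rpowDefect (2 * m) a b - α * rpowDefect (2 * r) a b := by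
  have ha' : (0 : ℝ) < a := by exact_mod_cast ha
  have hb' : (0 : ℝ) < b := by exact_mod_cast hb
  have hab' : (0 : ℝ) < a + b := by positivity
  simp only [dispersion, rpowDefect, Int.cast_neg, Int.cast_add, abs_neg, abs_of_pos ha',
    abs_of_pos hb', abs_of_pos hab', rpow_add_one ha'.ne', rpow_add_one hb'.ne',
    rpow_add_one hab'.ne']
  ring

def ResonanceBound (lam : ℤ → ℝ) (c p : ℝ) (K : ℕ) (x y z : ℤ) : Prop :=
  (K : ℤ) ≤ max |x| (max |y| |z|) →
    c * max |(x : ℝ)| (max |(y : ℝ)| |(z : ℝ)|) ^ p * min |(x : ℝ)| (min |(y : ℝ)| |(z : ℝ)|)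
      ≤ |lam x + lam y + lam z|

namespace ResonanceBound

variable {lam : ℤ → ℝ} {c p : ℝ} {K : ℕ} {x y z : ℤ}

theorem swap₁₂ (h : ResonanceBound lam c p K x y z) : ResonanceBound lam c p K y x z := by
  intro hK
  rw [max_left_comm |(y : ℝ)|, min_left_comm |(y : ℝ)|, add_comm (lam y)]
  exact h (by rwa [max_left_comm])

theorem swap₂₃ (h : ResonanceBound lam c p K x y z) : ResonanceBound lam c p K x z y := by
  intro hK
  rw [max_comm |(z : ℝ)|, min_comm |(z : ℝ)|, add_right_comm]
  exact h (by rwa [max_comm |z|] at hK)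

theorem neg (hlam : ∀ k, lam (-k) = -lam k) (h : ResonanceBound lam c p K x y z) :
    ResonanceBound lam c p K (-x) (-y) (-z) := by
  simp only [ResonanceBound, Int.cast_neg, abs_neg, hlam, ← neg_add]
  exact h

end ResonanceBound

theorem resonanceBound_dispersion {α β μ m r c : ℝ} {K : ℕ}
    (hdom : ∀ u v : ℝ, 0 < u → u ≤ v → (K : ℝ) ≤ u + v →
      c * (u + v) ^ (2 * m) * u ≤ β * rpowDefect (2 * m) u v - α * rpowDefect (2 * r) u v)
    {a b : ℤ} (ha : 0 < a) (hab : a ≤ b) :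
    ResonanceBound (dispersion α β μ m r) c (2 * m) K a b (-(a + b)) := by
  have hb : 0 < b := ha.trans_le hab
  have ha' : (0 : ℝ) < a := by exact_mod_cast ha
  have hb' : (0 : ℝ) < b := by exact_mod_cast hb
  intro hK
  replace hK : (K : ℝ) ≤ max |(a : ℝ)| (max |(b : ℝ)| |((-(a + b) : ℤ) : ℝ)|) := by
    exact_mod_cast hK
  rw [dispersion_add_add_neg α β μ m r ha hb]
  push_cast at hK ⊢
  simp only [abs_neg, abs_of_pos ha', abs_of_pos hb', abs_of_pos (add_pos ha' hb'),
    max_eq_right (le_add_of_nonneg_left ha'.le), max_eq_right (le_add_of_nonneg_right hb'.le),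
    min_eq_left (le_add_of_nonneg_left ha'.le), min_eq_left (Int.cast_le.2 hab)] at hK ⊢
  exact (hdom a b ha' (Int.cast_le.2 hab) hK).trans (le_abs_self _)

/-- there are `c > 0` and `K ∈ ℕ` such that for all nonzero
`k₁, k₂, k₃ ∈ ℤ` with `k₁ + k₂ + k₃ = 0` and `max |k_j| ≥ K`,
`|λ_{k₁} + λ_{k₂} + λ_{k₃}| ≥ c (max_j |k_j|)^{2m} (min_j |k_j|)`. -/
theorem resonance_lower_bound
    (α β μ m r : ℝ) (hα : 0 < α) (hβ : 0 < β) (hr : 0 < r) (hrm : r < m)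
    (lam : ℤ → ℝ)
    (hlam : ∀ k : ℤ, lam k =
      -β * (k : ℝ) * |(k : ℝ)| ^ (2 * m) + α * (k : ℝ) * |(k : ℝ)| ^ (2 * r) - 2 * μ * (k : ℝ)) :
    ∃ c > 0, ∃ K : ℕ, ∀ k₁ k₂ k₃ : ℤ, k₁ ≠ 0 → k₂ ≠ 0 → k₃ ≠ 0 →
      k₁ + k₂ + k₃ = 0 → (K : ℤ) ≤ max |k₁| (max |k₂| |k₃|) →
      c * max |(k₁ : ℝ)| (max |(k₂ : ℝ)| |(k₃ : ℝ)|) ^ (2 * m)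
          * min |(k₁ : ℝ)| (min |(k₂ : ℝ)| |(k₃ : ℝ)|)
        ≤ |lam k₁ + lam k₂ + lam k₃| := by
  obtain rfl : lam = dispersion α β μ m r := funext hlam
  obtain ⟨K₀, hK₀⟩ := exists_le_sub_rpowDefect hα.le hβ hr.le hrm
  have hm : 0 < m := hr.trans hrm
  refine ⟨β * m / 2 ^ (2 * m), by positivity, ⌈K₀⌉₊, ?_⟩
  exact Int.zero_sum_triple_induction (fun _ _ _ => ResonanceBound.swap₁₂)
    (fun _ _ _ => ResonanceBound.swap₂₃)
    (fun _ _ _ => ResonanceBound.neg (dispersion_neg α β μ m r))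
    (fun a b ha hab => resonanceBound_dispersion
      (fun u v hu huv hK => hK₀ u v hu huv ((Nat.le_ceil K₀).trans hK)) ha hab)
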